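/- arXiv:2302.10995 — 3 statements merged into one kernel-verified Lean document; each statement's English description precedes it below -/
import Mathlib

section
/- For λ = (λ₁,…,λ_n) ∈ ℂⁿ with pairwise distinct entries and any l ∈ {1,…,n} and k ∈ {0,…,n-1}, the Vandermonde basis functions satisfy the recursive dynamics v'_{k,λ}(t) = λ_l v_{k,λ}(t) - λ_l v_{k,λ_{¬l}}(t) + v_{k-1,λ_{¬l}}(t), where v_{k,μ} := 0 whenever k < 0 or k ≥ |μ|. -/
open Finset

noncomputable def acoef {R : Type*} [CommRing R] {n : ℕ} (lam : Fin n → R) (k : ℤ) : R :=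
  if 0 ≤ k ∧ k ≤ (n : ℤ) then
    (-1 : R) ^ (n - k.toNat) *
      ∑ I ∈ Finset.univ.powersetCard (n - k.toNat), ∏ i ∈ I, lam i
  else 0

def removeEntry {α : Type*} {n : ℕ} (lam : Fin n → α) (i : Fin n) : Fin (n - 1) → α :=
  fun j => lam (Fin.cast (Nat.succ_pred_eq_of_pos i.pos)
    ((Fin.cast (Nat.succ_pred_eq_of_pos i.pos).symm i).succAbove j))


noncomputable def vbasisC {n : ℕ} (lam : Fin n → ℂ) (k : ℤ) (t : ℝ) : ℂ :=
  (-1 : ℂ) ^ (n - 1) *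
    ∑ i : Fin n, acoef (removeEntry lam i) k /
      (∏ j ∈ Finset.univ.erase i, (lam j - lam i)) * Complex.exp (lam i * t)

/-! Differentiating termwise multiplies the coefficient of `e^{λ_i t}` by `λ_i`, so
`v'_{k,λ} - λ_l v_{k,λ}` has coefficients `(λ_i - λ_l) c_i`, and the term `i = l` drops out.
For `i ≠ l`, the entries of `λ_{¬i}` as a multiset are those of `μ = (λ_{¬l})_{¬i}` plus `λ_l`.
Hence `∏ (X - λ_j)` over them is `(X - λ_l)` times the one for `μ`, which gives
`a_{k,λ_{¬i}} = a_{k-1,μ} - λ_l a_{k,μ}`, and the denominator of `c_i` gains the factor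
`λ_l - λ_i`, which cancels `λ_i - λ_l` and turns `(-1)^(n-1)` into `-(-1)^(n-2)`. -/

open Polynomial
open scoped Complex

section removeEntry

variable {α : Type*}

lemma removeEntry_eq_comp_succAbove {m : ℕ} (lam : Fin (m + 1) → α) (i : Fin (m + 1)) :
    removeEntry lam i = lam ∘ i.succAbove :=
  rfl

lemma prod_erase_eq_prod_removeEntry {M : Type*} [CommMonoid M] {n : ℕ} (f : Fin n → M)
    (i : Fin n) : ∏ j ∈ univ.erase i, f j = ∏ j, removeEntry f i j := by
  obtain ⟨m, rfl⟩ : ∃ m, n = m + 1 := ⟨n - 1, (Nat.succ_pred_eq_of_pos i.pos).symm⟩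
  rw [Fin.univ_succAbove m i, erase_cons, prod_map, removeEntry_eq_comp_succAbove]
  rfl

variable [DecidableEq α]

lemma map_univ_removeEntry {n : ℕ} (lam : Fin n → α) (i : Fin n) :
    univ.val.map (removeEntry lam i) = (univ.val.map lam).erase (lam i) := by
  obtain ⟨m, rfl⟩ : ∃ m, n = m + 1 := ⟨n - 1, (Nat.succ_pred_eq_of_pos i.pos).symm⟩
  rw [Fin.univ_succAbove m i, cons_val, Multiset.map_cons, Multiset.erase_cons_head, map_val,
    Multiset.map_map]
  rfl

lemma map_univ_removeEntry_succAbove {m : ℕ} (lam : Fin (m + 1) → α) (l : Fin (m + 1))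
    (j : Fin m) :
    univ.val.map (removeEntry lam (l.succAbove j)) =
      lam l ::ₘ univ.val.map (removeEntry (removeEntry lam l) j) := by
  have hmem : lam l ∈ univ.val.map (removeEntry lam (l.succAbove j)) := by
    obtain ⟨z, hz⟩ := Fin.exists_succAbove_eq (Fin.succAbove_ne l j).symm
    exact Multiset.mem_map.2 ⟨z, mem_univ z, congrArg lam hz⟩
  rw [map_univ_removeEntry (removeEntry lam l), map_univ_removeEntry lam l, Multiset.erase_comm]
  change _ = lam l ::ₘ ((univ.val.map lam).erase (lam (l.succAbove j))).erase (lam l)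
  rw [← map_univ_removeEntry, Multiset.cons_erase hmem]

end removeEntry

lemma acoef_eq_coeff {R : Type*} [CommRing R] {n : ℕ} (lam : Fin n → R) (k : ℕ) :
    acoef lam k = ((univ.val.map lam).map (fun a => X - C a)).prod.coeff k := by
  have hcard : Multiset.card (univ.val.map lam) = n := by simp
  by_cases hk : k ≤ n
  · rw [acoef, if_pos ⟨k.cast_nonneg, by exact_mod_cast hk⟩,
      Multiset.prod_X_sub_C_coeff _ (hcard.symm ▸ hk), hcard, esymm_map_val, Int.toNat_natCast]
  · nontriviality R
    rw [acoef, if_neg (by omega), coeff_eq_zero_of_natDegree_lt]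
    rw [natDegree_multiset_prod_X_sub_C_eq_card, hcard]
    omega

lemma acoef_of_map_eq_cons {R : Type*} [CommRing R] {m n : ℕ} {f : Fin m → R} {g : Fin n → R}
    {a : R} (h : univ.val.map f = a ::ₘ univ.val.map g) (k : ℕ) :
    acoef f k = acoef g (k - 1 : ℤ) - a * acoef g k := by
  rw [acoef_eq_coeff, h, Multiset.map_cons, Multiset.prod_cons, acoef_eq_coeff]
  cases k with
  | zero => simp [acoef]
  | succ k =>
    rw [mul_comm, coeff_mul_X_sub_C, Nat.cast_succ, add_sub_cancel_right, acoef_eq_coeff]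
    ring

-- `nodeCoeff λ_{¬i} λ_i k` is the coefficient of `e^{λ_i t}` in `v_{k,λ}`, up to the sign
-- `(-1)^(n-1)`.
noncomputable def nodeCoeff {K : Type*} [Field K] {p : ℕ} (f : Fin p → K) (x : K) (k : ℤ) : K :=
  acoef f k / ∏ j, (f j - x)

lemma mul_nodeCoeff_of_map_eq_cons {K : Type*} [Field K] {m n : ℕ} {f : Fin m → K}
    {g : Fin n → K} {a x : K} (h : univ.val.map f = a ::ₘ univ.val.map g) (hx : x ≠ a) (k : ℕ) :
    (x - a) * nodeCoeff f x k = a * nodeCoeff g x k - nodeCoeff g x (k - 1 : ℤ) := by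
  have hprod : ∏ j, (f j - x) = (a - x) * ∏ j, (g j - x) := by
    have hf : ∏ j, (f j - x) = ((univ.val.map f).map (· - x)).prod := by
      rw [Multiset.map_map]; rfl
    rw [hf, h, Multiset.map_cons, Multiset.prod_cons, Multiset.map_map]
    rfl
  have hax : a - x ≠ 0 := sub_ne_zero.2 hx.symm
  rw [nodeCoeff, nodeCoeff, nodeCoeff, hprod, acoef_of_map_eq_cons h, ← neg_sub a x]
  field_simp
  ring

lemma vbasisC_eq_sum_nodeCoeff {n : ℕ} (lam : Fin n → ℂ) (k : ℤ) (t : ℝ) :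
    vbasisC lam k t =
      (-1) ^ (n - 1) * ∑ i, nodeCoeff (removeEntry lam i) (lam i) k * cexp (lam i * t) := by
  simp only [vbasisC, nodeCoeff, prod_erase_eq_prod_removeEntry fun j => lam j - _]
  rfl

lemma hasDerivAt_cexp_const_mul_ofReal (a : ℂ) (t : ℝ) :
    HasDerivAt (fun s : ℝ => cexp (a * s)) (a * cexp (a * t)) t := by
  simpa [mul_comm] using (((hasDerivAt_id (t : ℂ)).const_mul a).cexp).comp_ofReal

lemma hasDerivAt_vbasisC {n : ℕ} (lam : Fin n → ℂ) (k : ℤ) (t : ℝ) :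
    HasDerivAt (vbasisC lam k) ((-1) ^ (n - 1) *
      ∑ i, nodeCoeff (removeEntry lam i) (lam i) k * (lam i * cexp (lam i * t))) t := by
  rw [funext (vbasisC_eq_sum_nodeCoeff lam k)]
  exact (HasDerivAt.fun_sum fun i _ =>
    (hasDerivAt_cexp_const_mul_ofReal (lam i) t).const_mul _).const_mul _

lemma vbasisC_removeEntry_pred_sub {m : ℕ} (lam : Fin (m + 1) → ℂ) (l : Fin (m + 1))
    (hl : ∀ j, lam (l.succAbove j) ≠ lam l) (k : ℕ) (t : ℝ) :
    vbasisC (removeEntry lam l) (k - 1 : ℤ) t - lam l * vbasisC (removeEntry lam l) k t =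
      (-1) ^ m * ∑ i, nodeCoeff (removeEntry lam i) (lam i) k *
        ((lam i - lam l) * cexp (lam i * t)) := by
  rw [Fin.sum_univ_succAbove _ l, sub_self, zero_mul, mul_zero, zero_add,
    vbasisC_eq_sum_nodeCoeff, vbasisC_eq_sum_nodeCoeff]
  cases m with
  | zero => simp
  | succ m =>
    simp only [Nat.add_sub_cancel, mul_sum, ← sum_sub_distrib, pow_succ]
    refine sum_congr rfl fun j _ => ?_
    rw [show removeEntry lam l j = lam (l.succAbove j) from rfl]
    linear_combination ((-1) ^ m * cexp (lam (l.succAbove j) * t)) *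
      mul_nodeCoeff_of_map_eq_cons (map_univ_removeEntry_succAbove lam l j) (hl j) k

theorem recursive_vandermonde_basis_dynamics_general (n : ℕ) (lam : Fin n → ℂ)
    (h : Function.Injective lam) (l : Fin n) (k : ℕ) (t : ℝ) :
    HasDerivAt (fun s : ℝ => vbasisC lam (k : ℤ) s)
      (lam l * vbasisC lam (k : ℤ) t - lam l * vbasisC (removeEntry lam l) (k : ℤ) t +
        vbasisC (removeEntry lam l) ((k : ℤ) - 1) t) t := by
  obtain ⟨m, rfl⟩ : ∃ m, n = m + 1 := ⟨n - 1, (Nat.succ_pred_eq_of_pos l.pos).symm⟩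
  have hl : ∀ j, lam (l.succAbove j) ≠ lam l := fun j => h.ne (Fin.succAbove_ne l j)
  refine (hasDerivAt_vbasisC lam k t).congr_deriv ?_
  rw [sub_add_eq_add_sub, add_sub_assoc, vbasisC_removeEntry_pred_sub lam l hl,
    vbasisC_eq_sum_nodeCoeff]
  simp only [Nat.add_sub_cancel, mul_sum, ← sum_add_distrib]
  exact sum_congr rfl fun i _ => by ring

/-- Recursive Vandermonde basis dynamics. -/
theorem recursive_vandermonde_basis_dynamics (n : ℕ) (lam : Fin n → ℂ)
    (h : Function.Injective lam) (l : Fin n) (k : ℕ) (hk : k < n) (t : ℝ) :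
    HasDerivAt (fun s : ℝ => vbasisC lam (k : ℤ) s)
      (lam l * vbasisC lam (k : ℤ) t - lam l * vbasisC (removeEntry lam l) (k : ℤ) t +
        vbasisC (removeEntry lam l) ((k : ℤ) - 1) t) t :=
  recursive_vandermonde_basis_dynamics_general n lam h l k t
end

section
/- If λ = (λ₁,…,λ_n) ∈ ℝⁿ has pairwise distinct, strictly negative entries, then for every k ∈ {1,…,n-1}, lim_{t→∞} v_{k-1,λ}(t)/v_{k,λ}(t) = a_{k-1, λ_{¬max}} / a_{k, λ_{¬max}}, where λ_{¬max} removes the maximal entry of λ. -/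
open Finset

noncomputable def vbasisR {n : ℕ} (lam : Fin n → ℝ) (k : ℤ) (t : ℝ) : ℝ :=
  (-1 : ℝ) ^ (n - 1) *
    ∑ i : Fin n, acoef (removeEntry lam i) k /
      (∏ j ∈ Finset.univ.erase i, (lam j - lam i)) * Real.exp (lam i * t)

/-!
`v_{k-1,λ}` and `v_{k,λ}` are exponential sums `∑ cᵢ e^{λᵢ t}` over the same exponents; divided by
`e^{λ_max t}`, each tends to its coefficient at the largest exponent, which is
`(-1)^{n-1} a_{·,λ_{¬max}} / ∏_{j ≠ max} (λ_j - λ_max)`. Everything but `a_{·,λ_{¬max}}` cancels in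
the ratio, and `a_{k,λ_{¬max}} ≠ 0` since, all entries being negative, every term of the elementary
symmetric sum defining it has the same sign.
-/

open Filter Topology Real

theorem acoef_pos {R : Type*} [CommRing R] [LinearOrder R] [IsStrictOrderedRing R] {n : ℕ}
    (lam : Fin n → R) (hneg : ∀ i, lam i < 0) {k : ℤ} (h0 : 0 ≤ k) (hk : k ≤ n) :
    0 < acoef lam k := by
  rw [acoef, if_pos ⟨h0, hk⟩, mul_sum]
  refine sum_pos (fun I hI => ?_) (powersetCard_nonempty.mpr (by simp))
  rw [← (mem_powersetCard.mp hI).2, ← prod_neg]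
  exact prod_pos fun i _ => neg_pos.mpr (hneg i)

theorem tendsto_sum_mul_exp_div_exp_of_forall_lt {ι : Type*} [Fintype ι] (c μ : ι → ℝ) (i₀ : ι)
    (hμ : ∀ i, i ≠ i₀ → μ i < μ i₀) :
    Tendsto (fun t => (∑ i, c i * exp (μ i * t)) / exp (μ i₀ * t)) atTop (𝓝 (c i₀)) := by
  classical
  have hterm (i : ι) (t : ℝ) : c i * exp (μ i * t) / exp (μ i₀ * t)
      = c i * exp ((μ i - μ i₀) * t) := by
    rw [mul_div_assoc, ← exp_sub, sub_mul]
  simp only [sum_div, hterm]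
  rw [← Fintype.sum_ite_eq' i₀ c]
  refine tendsto_finsetSum _ fun i _ => ?_
  split_ifs with hi
  · subst hi
    simp
  · have hlin : Tendsto (fun t => (μ i - μ i₀) * t) atTop atBot :=
      tendsto_id.const_mul_atTop_of_neg (sub_neg.mpr (hμ i hi))
    simpa using (tendsto_exp_atBot.comp hlin).const_mul (c i)

theorem tendsto_sum_mul_exp_div_sum_mul_exp {ι : Type*} [Fintype ι] (c d μ : ι → ℝ) (i₀ : ι)
    (hμ : ∀ i, i ≠ i₀ → μ i < μ i₀) (hd : d i₀ ≠ 0) :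
    Tendsto (fun t => (∑ i, c i * exp (μ i * t)) / ∑ i, d i * exp (μ i * t)) atTop
      (𝓝 (c i₀ / d i₀)) := by
  refine ((tendsto_sum_mul_exp_div_exp_of_forall_lt c μ i₀ hμ).div
    (tendsto_sum_mul_exp_div_exp_of_forall_lt d μ i₀ hμ) hd).congr fun t => ?_
  exact div_div_div_cancel_right₀ (exp_ne_zero _) _ _

noncomputable def vbasisCoeff {n : ℕ} (lam : Fin n → ℝ) (k : ℤ) (i : Fin n) : ℝ :=
  (-1) ^ (n - 1) * (acoef (removeEntry lam i) k / ∏ j ∈ univ.erase i, (lam j - lam i))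

theorem vbasisR_eq_sum {n : ℕ} (lam : Fin n → ℝ) (k : ℤ) (t : ℝ) :
    vbasisR lam k t = ∑ i, vbasisCoeff lam k i * exp (lam i * t) := by
  simp only [vbasisR, vbasisCoeff, mul_sum, mul_assoc]

theorem vandermonde_basis_ratio_limit_general (n : ℕ) (lam : Fin n → ℝ)
    (hneg : ∀ i, lam i < 0)
    (imax : Fin n) (hmax : ∀ j, j ≠ imax → lam j < lam imax)
    (k : ℕ) (hk : k < n) :
    Filter.Tendsto (fun t : ℝ => vbasisR lam ((k : ℤ) - 1) t / vbasisR lam (k : ℤ) t)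
      Filter.atTop
      (nhds (acoef (removeEntry lam imax) ((k : ℤ) - 1) /
        acoef (removeEntry lam imax) (k : ℤ))) := by
  have hsign : ((-1) ^ (n - 1) : ℝ) ≠ 0 := pow_ne_zero _ (by norm_num)
  have hgap : ∏ j ∈ univ.erase imax, (lam j - lam imax) ≠ 0 :=
    prod_ne_zero_iff.mpr fun j hj => sub_ne_zero.mpr (hmax j (ne_of_mem_erase hj)).ne
  have hA : acoef (removeEntry lam imax) k ≠ 0 :=
    (acoef_pos _ (fun _ => hneg _) (Nat.cast_nonneg k) (by omega)).ne'
  have hlim := tendsto_sum_mul_exp_div_sum_mul_exp (vbasisCoeff lam (k - 1)) (vbasisCoeff lam k)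
    lam imax hmax (mul_ne_zero hsign (div_ne_zero hA hgap))
  rw [vbasisCoeff, vbasisCoeff, mul_div_mul_left _ _ hsign, div_div_div_cancel_right₀ hgap] at hlim
  simpa only [vbasisR_eq_sum] using hlim

/-- Vandermonde basis ratio limit: v_{k-1}/v_k → a_{k-1,λ_{¬max}}/a_{k,λ_{¬max}}. -/
theorem vandermonde_basis_ratio_limit (n : ℕ) (lam : Fin n → ℝ)
    (h : Function.Injective lam) (hneg : ∀ i, lam i < 0)
    (imax : Fin n) (hmax : ∀ j, j ≠ imax → lam j < lam imax)
    (k : ℕ) (hk1 : 1 ≤ k) (hk : k < n) :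
    Filter.Tendsto (fun t : ℝ => vbasisR lam ((k : ℤ) - 1) t / vbasisR lam (k : ℤ) t)
      Filter.atTop
      (nhds (acoef (removeEntry lam imax) ((k : ℤ) - 1) /
        acoef (removeEntry lam imax) (k : ℤ))) :=
  vandermonde_basis_ratio_limit_general n lam hneg imax hmax k hk
end

section
/- If λ = (λ₁,…,λ_n) ∈ ℝⁿ has pairwise distinct, strictly negative entries, then the zeroth Vandermonde basis function satisfies v_{0,λ}(t) ≤ 1 and v'_{0,λ}(t) ≤ 0 for all t ≥ 0, with equality v_{0,λ}(0) = 1. -/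
open Finset

/-!
With the Lagrange basis polynomials `ℓᵢ` at the nodes `λ`, `v_{0,λ}(t) = ∑ᵢ ℓᵢ(0) e^{λᵢ t}`, so
`v_{0,λ}(0) = ∑ᵢ ℓᵢ(0) = 1`, and `v'_{0,λ}(t) = -(∏ⱼ -λⱼ) E(t)`, where `E(t)` is the divided
difference of `x ↦ e^{x t}` at the nodes. These divided differences are nonnegative for `t ≥ 0`:
adding a node `a` to a node set `s` gives `E' = λₐ E + E_s` with `E(0) ≥ 0`, and a linear ODE with
nonnegative forcing preserves nonnegativity. So `v_{0,λ}` is nonincreasing on `[0, ∞)`.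
-/

open Polynomial in
theorem Lagrange.sum_prod_sub_div_sub_eq_one {F ι : Type*} [Field F] [DecidableEq ι]
    {s : Finset ι} {v : ι → F} (hvs : Set.InjOn v s) (hs : s.Nonempty) (x : F) :
    ∑ i ∈ s, ∏ j ∈ s.erase i, (x - v j) / (v i - v j) = 1 := by
  have h := congrArg (eval x) (Lagrange.sum_basis hvs hs)
  rw [eval_finsetSum, eval_one] at h
  rw [← h]
  refine Finset.sum_congr rfl fun i _ => ?_
  simp only [Lagrange.basis, Lagrange.basisDivisor, eval_prod, eval_mul, eval_C, eval_sub,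
    eval_X]
  exact Finset.prod_congr rfl fun j _ => div_eq_inv_mul _ _

open Polynomial in
theorem Lagrange.sum_inv_prod_sub_nonneg {ι : Type*} [DecidableEq ι] {s : Finset ι}
    {v : ι → ℝ} (hvs : Set.InjOn v s) :
    0 ≤ ∑ i ∈ s, (∏ j ∈ s.erase i, (v i - v j))⁻¹ := by
  rcases s.eq_empty_or_nonempty with rfl | hs
  · simp
  -- the sum is the coefficient of `X ^ (#s - 1)` in the constant polynomial `1`
  have h := Lagrange.coeff_eq_sum hvs (P := 1) (by simpa using hs)
  simp only [eval_one, one_div] at h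
  rw [← h, coeff_one]
  split_ifs <;> norm_num

theorem mul_prod_neg_div_sub {F ι : Type*} [Field F] [DecidableEq ι] {s : Finset ι} {i : ι}
    (hi : i ∈ s) (v : ι → F) :
    v i * ∏ j ∈ s.erase i, -v j / (v i - v j) =
      -(∏ j ∈ s, -v j) * (∏ j ∈ s.erase i, (v i - v j))⁻¹ := by
  rw [← Finset.mul_prod_erase s _ hi, Finset.prod_div_distrib]
  ring

theorem hasDerivAt_sum_mul_exp {ι : Type*} (s : Finset ι) (c v : ι → ℝ) (t : ℝ) :
    HasDerivAt (fun u => ∑ i ∈ s, c i * Real.exp (v i * u))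
      (∑ i ∈ s, c i * v i * Real.exp (v i * t)) t := by
  refine HasDerivAt.fun_sum fun i _ => ?_
  exact (((hasDerivAt_id' t).const_mul (v i)).exp.const_mul (c i)).congr_deriv (by ring)

theorem nonneg_of_hasDerivAt_eq_mul_add {f g : ℝ → ℝ} {c t : ℝ}
    (hf : ∀ u, HasDerivAt f (c * f u + g u) u) (hg : ∀ u, 0 ≤ u → 0 ≤ g u) (h0 : 0 ≤ f 0)
    (ht : 0 ≤ t) : 0 ≤ f t := by
  set H : ℝ → ℝ := fun u => Real.exp (-c * u) * f u
  have hH : ∀ u, HasDerivAt H (Real.exp (-c * u) * g u) u := fun u =>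
    (((hasDerivAt_id' u).const_mul (-c)).exp.mul (hf u)).congr_deriv (by ring)
  have hmono : MonotoneOn H (Set.Ici 0) :=
    monotoneOn_of_deriv_nonneg (convex_Ici 0)
      (fun u _ => (hH u).continuousAt.continuousWithinAt)
      (fun u _ => (hH u).differentiableAt.differentiableWithinAt)
      fun u hu => (hH u).deriv ▸
        mul_nonneg (Real.exp_nonneg _) (hg u (interior_subset hu))
  have hHt : 0 ≤ H t :=
    calc 0 ≤ f 0 := h0
      _ = H 0 := by simp [H]
      _ ≤ H t := hmono Set.self_mem_Ici ht ht
  have hft : f t = Real.exp (c * t) * H t := by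
    simp only [H, ← mul_assoc, ← Real.exp_add, neg_mul, add_neg_cancel, Real.exp_zero, one_mul]
  rw [hft]
  positivity

/-- The divided difference of `x ↦ exp (x * t)` at the nodes `v i`, `i ∈ s`. -/
noncomputable def expDivDiff {ι : Type*} [DecidableEq ι] (v : ι → ℝ) (s : Finset ι) (t : ℝ) :
    ℝ :=
  ∑ i ∈ s, (∏ j ∈ s.erase i, (v i - v j))⁻¹ * Real.exp (v i * t)

section expDivDiff

variable {ι : Type*} [DecidableEq ι] {v : ι → ℝ} {s : Finset ι} {a : ι}

theorem hasDerivAt_expDivDiff_insert (hvs : Set.InjOn v ↑(insert a s)) (ha : a ∉ s) (t : ℝ) :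
    HasDerivAt (expDivDiff v (insert a s))
      (v a * expDivDiff v (insert a s) t + expDivDiff v s t) t := by
  refine (hasDerivAt_sum_mul_exp (insert a s) _ v t).congr_deriv ?_
  suffices ∑ i ∈ insert a s, (∏ j ∈ (insert a s).erase i, (v i - v j))⁻¹ * (v i - v a) *
      Real.exp (v i * t) = expDivDiff v s t by
    rw [expDivDiff, Finset.mul_sum, ← this, ← Finset.sum_add_distrib]
    exact Finset.sum_congr rfl fun i _ => by ring
  rw [Finset.sum_insert ha, sub_self, mul_zero, zero_mul, zero_add, expDivDiff]
  refine Finset.sum_congr rfl fun i hi => ?_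
  have hia : i ≠ a := fun h => ha (h ▸ hi)
  have hsub : v i - v a ≠ 0 :=
    sub_ne_zero.mpr fun h => hia (hvs (by simp [hi]) (by simp) h)
  rw [Finset.erase_insert_of_ne hia.symm, Finset.prod_insert (by simp [ha]), mul_inv,
    mul_right_comm _ _ (v i - v a), inv_mul_cancel₀ hsub, one_mul]

theorem expDivDiff_nonneg (hvs : Set.InjOn v s) {t : ℝ} (ht : 0 ≤ t) : 0 ≤ expDivDiff v s t := by
  induction s using Finset.induction_on generalizing t with
  | empty => simp [expDivDiff]
  | insert a s ha ih =>
    refine nonneg_of_hasDerivAt_eq_mul_add (hasDerivAt_expDivDiff_insert hvs ha)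
      (fun u hu => ih (hvs.mono (by simp)) hu) ?_ ht
    simpa [expDivDiff] using Lagrange.sum_inv_prod_sub_nonneg hvs

end expDivDiff

theorem acoef_zero {R : Type*} [CommRing R] {n : ℕ} (μ : Fin n → R) :
    acoef μ 0 = ∏ i, -μ i := by
  have huniv : (Finset.univ : Finset (Fin n)).powersetCard n = {Finset.univ} := by
    simpa using Finset.powersetCard_self (Finset.univ : Finset (Fin n))
  rw [acoef, if_pos ⟨le_rfl, Int.natCast_nonneg n⟩, Int.toNat_zero, Nat.sub_zero, huniv,
    Finset.sum_singleton, Finset.prod_neg, Finset.card_univ, Fintype.card_fin]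

theorem prod_removeEntry {M : Type*} [CommMonoid M] {α : Type*} {n : ℕ} (lam : Fin (n + 1) → α)
    (i : Fin (n + 1)) (f : α → M) :
    ∏ j, f (removeEntry lam i j) = ∏ j ∈ Finset.univ.erase i, f (lam j) := by
  rw [← Finset.compl_singleton, ← Fin.image_succAbove_univ,
    Finset.prod_image fun _ _ _ _ h => Fin.succAbove_right_injective h]
  rfl

theorem vbasisR_zero_eq_sum {n : ℕ} (lam : Fin (n + 1) → ℝ) (t : ℝ) :
    vbasisR lam 0 t =
      ∑ i, (∏ j ∈ Finset.univ.erase i, -lam j / (lam i - lam j)) * Real.exp (lam i * t) := by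
  rw [vbasisR, Finset.mul_sum]
  refine Finset.sum_congr rfl fun i _ => ?_
  have hsign : ∏ j ∈ Finset.univ.erase i, (lam j - lam i)
      = (-1) ^ n * ∏ j ∈ Finset.univ.erase i, (lam i - lam j) := by
    simp_rw [← neg_sub (lam i), Finset.prod_neg, Finset.card_erase_of_mem (Finset.mem_univ i),
      Finset.card_univ, Fintype.card_fin, Nat.add_sub_cancel]
  rw [acoef_zero, prod_removeEntry lam i (fun x => -x), hsign, Finset.prod_div_distrib,
    Nat.add_sub_cancel, ← mul_assoc, ← mul_div_assoc,
    mul_div_mul_left _ _ (pow_ne_zero n (by norm_num))]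

theorem vbasisR_zero_zero_eq_one {n : ℕ} {lam : Fin (n + 1) → ℝ} (h : Function.Injective lam) :
    vbasisR lam 0 0 = 1 := by
  simpa [vbasisR_zero_eq_sum] using
    Lagrange.sum_prod_sub_div_sub_eq_one h.injOn Finset.univ_nonempty 0

theorem hasDerivAt_vbasisR_zero {n : ℕ} (lam : Fin (n + 1) → ℝ) (t : ℝ) :
    HasDerivAt (vbasisR lam 0) (-(∏ j, -lam j) * expDivDiff lam Finset.univ t) t := by
  rw [show vbasisR lam 0 = _ from funext (vbasisR_zero_eq_sum lam)]
  refine (hasDerivAt_sum_mul_exp _ _ lam t).congr_deriv ?_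
  rw [expDivDiff, Finset.mul_sum]
  refine Finset.sum_congr rfl fun i hi => ?_
  rw [mul_comm _ (lam i), mul_prod_neg_div_sub hi, mul_assoc]

/-- The zeroth Vandermonde basis function is bounded above by 1 and nonincreasing. -/
theorem zeroth_vandermonde_basis_bounds (n : ℕ) (hn : 0 < n) (lam : Fin n → ℝ)
    (h : Function.Injective lam) (hneg : ∀ i, lam i < 0) :
    vbasisR lam 0 0 = 1 ∧
      ∀ t : ℝ, 0 ≤ t →
        vbasisR lam 0 t ≤ 1 ∧ deriv (fun s : ℝ => vbasisR lam 0 s) t ≤ 0 := by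
  obtain ⟨m, rfl⟩ : ∃ m, n = m + 1 := ⟨n - 1, by omega⟩
  have hprod : 0 < ∏ j, -lam j := Finset.prod_pos fun j _ => neg_pos.mpr (hneg j)
  have hderiv : ∀ t, 0 ≤ t → deriv (vbasisR lam 0) t ≤ 0 := fun t ht => by
    rw [(hasDerivAt_vbasisR_zero lam t).deriv]
    exact mul_nonpos_of_nonpos_of_nonneg (by linarith) (expDivDiff_nonneg h.injOn ht)
  have hanti : AntitoneOn (vbasisR lam 0) (Set.Ici 0) :=
    antitoneOn_of_deriv_nonpos (convex_Ici 0)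
      (fun t _ => (hasDerivAt_vbasisR_zero lam t).continuousAt.continuousWithinAt)
      (fun t _ => (hasDerivAt_vbasisR_zero lam t).differentiableAt.differentiableWithinAt)
      fun t ht => hderiv t (interior_subset ht)
  refine ⟨vbasisR_zero_zero_eq_one h, fun t ht => ⟨?_, hderiv t ht⟩⟩
  exact (hanti Set.self_mem_Ici ht ht).trans_eq (vbasisR_zero_zero_eq_one h)
end
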